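/- Target coverage bound for hard pseudo-calibration (population version): suppose Q(S̃ ≤ q) ≥ 1 - α where S̃ = s(X, f̂(X)), the margin γ_f is L_γ-Lipschitz in x, P_Y = Q_Y, and W₁(P_{X|y}, Q_{X|y}) ≤ ρ for all y. Then Q(s(X,Y) ≤ q) ≥ 1 - α - L_r(f,P) - L_γ·ρ, where L_r(f,P) is the source ramp loss. -/

import Mathlib

open MeasureTheory
open scoped ENNReal

/-- The set of couplings of two measures. -/
def couplings {X : Type*} [MeasurableSpace X] (P Q : Measure X) :
    Set (Measure (X × X)) :=
  {π | IsProbabilityMeasure π ∧ π.map Prod.fst = P ∧ π.map Prod.snd = Q}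

/-- The 1-Wasserstein distance: infimum over couplings of the expected distance. -/
noncomputable def W1 {X : Type*} [MeasurableSpace X] [PseudoEMetricSpace X]
    (P Q : Measure X) : ℝ≥0∞ :=
  ⨅ π ∈ couplings P Q, ∫⁻ p, edist p.1 p.2 ∂π

/-- The ramp function `r(t) = min(max(1-t,0),1)`. -/
noncomputable def ramp (t : ℝ) : ℝ := min (max (1 - t) 0) 1

/-- Multiclass margin: `γ_f(x,y) = f(x)_y - max_{k ≠ y} f(x)_k`. -/
noncomputable def margin {X : Type*} {K : ℕ} (hK : 2 ≤ K)
    (f : X → Fin K → ℝ) (x : X) (y : Fin K) : ℝ :=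
  f x y - (Finset.univ.erase y).sup' (by
    rw [← Finset.card_pos, Finset.card_erase_of_mem (Finset.mem_univ y),
      Finset.card_univ, Fintype.card_fin]
    omega) (f x)

/-- Nonconformity score `s(x,y) = -γ_f(x,y)`. -/
noncomputable def score {X : Type*} {K : ℕ} (hK : 2 ≤ K)
    (f : X → Fin K → ℝ) (x : X) (y : Fin K) : ℝ :=
  -(margin hK f x y)

/-! If the true label `y` has positive margin it is the unique maximiser of `f x`, so
`f̂ x = y` and the pseudo-score equals the true score: the pseudo-coverage event lies in the
true coverage event up to `{γ_f ≤ 0}`. The ramp loss dominates the indicator of `{γ_f ≤ 0}`,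
and `r ∘ γ_f(·, y)` is `L_γ`-Lipschitz, so the easy half of Kantorovich–Rubinstein transports
its expectation from `Q_{X|y}` to `P_{X|y}` at cost `L_γ ρ`; averaging over the shared label
law finishes. -/

open scoped NNReal

section Ramp

lemma ramp_nonneg (t : ℝ) : 0 ≤ ramp t := le_min (le_max_right _ _) zero_le_one

lemma ramp_le_one (t : ℝ) : ramp t ≤ 1 := min_le_right _ _

lemma ramp_of_nonpos {t : ℝ} (ht : t ≤ 0) : ramp t = 1 := by
  rw [ramp, max_eq_left (by linarith), min_eq_right (by linarith)]

lemma lipschitzWith_one_ramp : LipschitzWith 1 ramp :=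
  have hsub : LipschitzWith 1 fun t : ℝ => 1 - t :=
    .of_dist_le_mul fun a b => by
      rw [Real.dist_eq, Real.dist_eq, NNReal.coe_one, one_mul, sub_sub_sub_cancel_left,
        abs_sub_comm]
  (hsub.max_const 0).min_const 1

lemma integrable_ramp_comp {α : Type*} [MeasurableSpace α] {μ : Measure α} [IsFiniteMeasure μ]
    {g : α → ℝ} (hg : Measurable g) : Integrable (fun a => ramp (g a)) μ :=
  .of_bound (lipschitzWith_one_ramp.continuous.measurable.comp hg).aestronglyMeasurable 1
    (.of_forall fun a => by rw [Real.norm_of_nonneg (ramp_nonneg _)]; exact ramp_le_one _)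

lemma measure_nonpos_le_ofReal_integral_ramp {α : Type*} [MeasurableSpace α] {μ : Measure α}
    [IsFiniteMeasure μ] {g : α → ℝ} (hg : Measurable g) :
    μ {a | g a ≤ 0} ≤ ENNReal.ofReal (∫ a, ramp (g a) ∂μ) := by
  rw [ofReal_integral_eq_lintegral_ofReal (integrable_ramp_comp hg)
      (.of_forall fun a => ramp_nonneg _),
    ← lintegral_indicator_one (measurableSet_le hg measurable_const)]
  refine lintegral_mono fun a => ?_
  by_cases ha : g a ≤ 0
  · simp [Set.indicator_of_mem (show a ∈ {a | g a ≤ 0} from ha), ramp_of_nonpos ha]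
  · simp [Set.indicator_of_notMem (show a ∉ {a | g a ≤ 0} from ha)]

end Ramp

section Margin

variable {X : Type*} {K : ℕ} (hK : 2 ≤ K) {f : X → Fin K → ℝ}

lemma measurable_margin [MeasurableSpace X] (hf : ∀ k, Measurable fun x => f x k) (y : Fin K) :
    Measurable fun x => margin hK f x y := by
  refine (hf y).sub ?_
  convert Finset.measurable_sup' _ fun k (_ : k ∈ Finset.univ.erase y) => hf k using 1
  ext x
  exact (Finset.sup'_apply (C := fun _ => ℝ) _ (fun k x => f x k) x).symm

lemma eq_of_margin_pos {x : X} {k y : Fin K} (hk : ∀ j, f x j ≤ f x k)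
    (hy : 0 < margin hK f x y) : k = y := by
  by_contra hky
  have : f x k ≤ (Finset.univ.erase y).sup' _ (f x) :=
    Finset.le_sup' (f x) (Finset.mem_erase.2 ⟨hky, Finset.mem_univ k⟩)
  rw [margin] at hy
  linarith [hk y]

lemma setOf_score_le_subset_union {fhat : X → Fin K} (hfhat : ∀ x k, f x k ≤ f x (fhat x))
    (q : ℝ) :
    {p : X × Fin K | score hK f p.1 (fhat p.1) ≤ q} ⊆
      {p | score hK f p.1 p.2 ≤ q} ∪ {p | margin hK f p.1 p.2 ≤ 0} := by
  rintro ⟨x, y⟩ hp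
  rcases le_or_gt (margin hK f x y) 0 with hy | hy
  · exact Or.inr hy
  · exact Or.inl (eq_of_margin_pos hK (hfhat x) hy ▸ hp)

end Margin

section Wasserstein

variable {X : Type*} [PseudoMetricSpace X] [MeasurableSpace X] {μ ν : Measure X} {g : X → ℝ}
  {L : ℝ≥0}

lemma edist_integral_le_mul_lintegral_of_mem_couplings (hg : LipschitzWith L g)
    (hμ : Integrable g μ) (hν : Integrable g ν) {π : Measure (X × X)}
    (hπ : π ∈ couplings μ ν) :
    edist (∫ x, g x ∂μ) (∫ x, g x ∂ν) ≤ L * ∫⁻ p, edist p.1 p.2 ∂π := by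
  obtain ⟨-, hπμ, hπν⟩ := hπ
  subst hπμ hπν
  rw [integral_map measurable_fst.aemeasurable hμ.aestronglyMeasurable,
    integral_map measurable_snd.aemeasurable hν.aestronglyMeasurable]
  calc edist (∫ p, g p.1 ∂π) (∫ p, g p.2 ∂π)
      ≤ ∫⁻ p, edist (g p.1) (g p.2) ∂π :=
        edist_integral_le_lintegral_edist (hμ.comp_measurable measurable_fst)
          (hν.comp_measurable measurable_snd)
    _ ≤ ∫⁻ p, L * edist p.1 p.2 ∂π := lintegral_mono fun p => hg p.1 p.2
    _ = L * ∫⁻ p, edist p.1 p.2 ∂π := lintegral_const_mul' _ _ ENNReal.coe_ne_top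

lemma edist_integral_le_mul_W1 (hg : LipschitzWith L g) (hμ : Integrable g μ)
    (hν : Integrable g ν) (hW : W1 μ ν ≠ ⊤) :
    edist (∫ x, g x ∂μ) (∫ x, g x ∂ν) ≤ L * W1 μ ν := by
  refine ENNReal.le_of_forall_pos_le_add fun ε hε _ => ?_
  -- `ε / L = ⊤` when `L = 0`, and then any coupling will do.
  obtain ⟨π, hπ, hπW⟩ :
      ∃ π ∈ couplings μ ν, ∫⁻ p, edist p.1 p.2 ∂π < W1 μ ν + ε / L := by
    simpa only [W1, iInf_lt_iff, exists_prop] using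
      ENNReal.lt_add_right hW
        (ENNReal.div_pos (by exact_mod_cast hε.ne') ENNReal.coe_ne_top).ne'
  calc edist (∫ x, g x ∂μ) (∫ x, g x ∂ν)
      ≤ L * ∫⁻ p, edist p.1 p.2 ∂π :=
        edist_integral_le_mul_lintegral_of_mem_couplings hg hμ hν hπ
    _ ≤ L * (W1 μ ν + ε / L) := by gcongr
    _ ≤ L * W1 μ ν + ε := by rw [mul_add]; gcongr; exact ENNReal.mul_div_le

lemma integral_le_integral_add_mul_of_W1_le (hg : LipschitzWith L g) (hμ : Integrable g μ)
    (hν : Integrable g ν) {ρ : ℝ} (hρ : 0 ≤ ρ) (hW : W1 μ ν ≤ ENNReal.ofReal ρ) :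
    ∫ x, g x ∂ν ≤ ∫ x, g x ∂μ + L * ρ := by
  have hdist : dist (∫ x, g x ∂μ) (∫ x, g x ∂ν) ≤ L * ρ := by
    rw [← ENNReal.ofReal_le_ofReal_iff (by positivity), ← edist_dist,
      ENNReal.ofReal_mul L.coe_nonneg, ENNReal.ofReal_coe_nnreal]
    calc edist (∫ x, g x ∂μ) (∫ x, g x ∂ν) ≤ L * W1 μ ν :=
          edist_integral_le_mul_W1 hg hμ hν (ne_top_of_le_ne_top ENNReal.ofReal_ne_top hW)
      _ ≤ L * ENNReal.ofReal ρ := by gcongr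
  rw [Real.dist_eq, abs_sub_comm] at hdist
  linarith [le_abs_self (∫ x, g x ∂ν - ∫ x, g x ∂μ)]

end Wasserstein

section Mixture

variable {X ι : Type*} [MeasurableSpace X] [MeasurableSpace ι] [Fintype ι]

noncomputable def classMixture (w : ι → ℝ≥0∞) (μ : ι → Measure X) : Measure (X × ι) :=
  ∑ y, w y • (μ y).map fun x => (x, y)

variable {w : ι → ℝ≥0∞} {μ ν : ι → Measure X}

lemma isProbabilityMeasure_classMixture [∀ y, IsProbabilityMeasure (μ y)]
    (hw : ∑ y, w y = 1) : IsProbabilityMeasure (classMixture w μ) := by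
  constructor
  simp [classMixture, Measure.map_apply measurable_prodMk_right MeasurableSet.univ, hw]

lemma integral_classMixture (hw : ∀ y, w y ≠ ⊤) {G : X × ι → ℝ} (hG : Measurable G)
    (hGμ : ∀ y, Integrable (fun x => G (x, y)) (μ y)) :
    ∫ p, G p ∂classMixture w μ = ∑ y, (w y).toReal * ∫ x, G (x, y) ∂μ y := by
  have hmap : ∀ y, Integrable G ((μ y).map fun x => (x, y)) := fun y =>
    (integrable_map_measure hG.aestronglyMeasurable measurable_prodMk_right.aemeasurable).2
      (hGμ y)
  rw [classMixture, integral_finsetSum_measure fun y _ => (hmap y).smul_measure (hw y)]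
  refine Finset.sum_congr rfl fun y _ => ?_
  rw [integral_smul_measure, integral_map measurable_prodMk_right.aemeasurable
    hG.aestronglyMeasurable, smul_eq_mul]

lemma integral_classMixture_le_add (hw : ∑ y, w y = 1) {G : X × ι → ℝ} (hG : Measurable G)
    (hGμ : ∀ y, Integrable (fun x => G (x, y)) (μ y))
    (hGν : ∀ y, Integrable (fun x => G (x, y)) (ν y)) {c : ℝ}
    (h : ∀ y, ∫ x, G (x, y) ∂ν y ≤ ∫ x, G (x, y) ∂μ y + c) :
    ∫ p, G p ∂classMixture w ν ≤ ∫ p, G p ∂classMixture w μ + c := by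
  have hw_top : ∀ y, w y ≠ ⊤ := fun y =>
    (ENNReal.lt_top_of_sum_ne_top (hw ▸ ENNReal.one_ne_top) (Finset.mem_univ y)).ne
  have hw_real : ∑ y, (w y).toReal = 1 := by
    rw [← ENNReal.toReal_sum fun y _ => hw_top y, hw, ENNReal.toReal_one]
  rw [integral_classMixture hw_top hG hGν, integral_classMixture hw_top hG hGμ]
  calc ∑ y, (w y).toReal * ∫ x, G (x, y) ∂ν y
      ≤ ∑ y, (w y).toReal * (∫ x, G (x, y) ∂μ y + c) := by gcongr with y; exact h y
    _ = ∑ y, (w y).toReal * ∫ x, G (x, y) ∂μ y + c := by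
      simp only [mul_add, Finset.sum_add_distrib, ← Finset.sum_mul, hw_real, one_mul]

end Mixture

theorem hard_pseudo_calibration_coverage_general {d K : ℕ} (hK : 2 ≤ K)
    (f : EuclideanSpace ℝ (Fin d) → Fin K → ℝ)
    (hfm : ∀ k, Measurable fun x => f x k)
    (fhat : EuclideanSpace ℝ (Fin d) → Fin K)
    (hfhat : ∀ x k, f x k ≤ f x (fhat x))
    (Lγ : ℝ) (hL : 0 ≤ Lγ)
    (hlip : ∀ x x' y, |margin hK f x y - margin hK f x' y| ≤ Lγ * dist x x')
    (Pc Qc : Fin K → Measure (EuclideanSpace ℝ (Fin d)))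
    [∀ y, IsProbabilityMeasure (Pc y)] [∀ y, IsProbabilityMeasure (Qc y)]
    (w : Fin K → ℝ≥0∞) (hw : ∑ y, w y = 1)
    (P Q : Measure (EuclideanSpace ℝ (Fin d) × Fin K))
    (hP : P = ∑ y, w y • ((Pc y).map fun x => (x, y)))
    (hQ : Q = ∑ y, w y • ((Qc y).map fun x => (x, y)))
    (ρ : ℝ) (hρ : 0 ≤ ρ)
    (hshift : ∀ y, W1 (Pc y) (Qc y) ≤ ENNReal.ofReal ρ)
    (α : ℝ) (q : ℝ)
    (hcov : ENNReal.ofReal (1 - α) ≤ Q {p | score hK f p.1 (fhat p.1) ≤ q}) :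
    1 - α - (∫ p, ramp (margin hK f p.1 p.2) ∂P) - Lγ * ρ ≤
      (Q {p | score hK f p.1 p.2 ≤ q}).toReal := by
  obtain rfl : P = classMixture w Pc := hP
  obtain rfl : Q = classMixture w Qc := hQ
  have := isProbabilityMeasure_classMixture (μ := Qc) hw
  have hmargin_y := measurable_margin hK hfm
  have hmargin : Measurable fun p : EuclideanSpace ℝ (Fin d) × Fin K => margin hK f p.1 p.2 :=
    measurable_from_prod_countable_left hmargin_y
  have hclass (y : Fin K) : ∫ x, ramp (margin hK f x y) ∂Qc y ≤
      ∫ x, ramp (margin hK f x y) ∂Pc y + Lγ * ρ := by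
    have hlip_y : LipschitzWith (Real.toNNReal Lγ) fun x => ramp (margin hK f x y) := by
      have := lipschitzWith_one_ramp.comp (LipschitzWith.of_dist_le_mul fun x x' =>
        (Real.coe_toNNReal _ hL).symm ▸ hlip x x' y)
      rwa [one_mul] at this
    simpa [Real.coe_toNNReal _ hL] using integral_le_integral_add_mul_of_W1_le hlip_y
      (integrable_ramp_comp (hmargin_y y)) (integrable_ramp_comp (hmargin_y y)) hρ (hshift y)
  have htransport := integral_classMixture_le_add hw
    (lipschitzWith_one_ramp.continuous.measurable.comp hmargin)
    (fun y => integrable_ramp_comp (hmargin_y y)) (fun y => integrable_ramp_comp (hmargin_y y))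
    hclass
  have hcover : ENNReal.ofReal (1 - α) ≤ classMixture w Qc {p | score hK f p.1 p.2 ≤ q} +
      ENNReal.ofReal (∫ p, ramp (margin hK f p.1 p.2) ∂classMixture w Pc + Lγ * ρ) :=
    calc ENNReal.ofReal (1 - α)
        ≤ classMixture w Qc ({p | score hK f p.1 p.2 ≤ q} ∪ {p | margin hK f p.1 p.2 ≤ 0}) :=
          hcov.trans (measure_mono (setOf_score_le_subset_union hK hfhat q))
      _ ≤ _ := (measure_union_le _ _).trans <| add_le_add_right
          ((measure_nonpos_le_ofReal_integral_ramp hmargin).trans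
            (ENNReal.ofReal_le_ofReal htransport)) _
  rw [sub_sub, ← ENNReal.ofReal_le_iff_le_toReal (measure_ne_top _ _),
    ENNReal.ofReal_sub _ (add_nonneg (integral_nonneg fun _ => ramp_nonneg _) (mul_nonneg hL hρ))]
  exact tsub_le_iff_right.2 hcover

/-- Target coverage bound for hard pseudo-calibration (population version):
if `Q(S̃ ≤ q) ≥ 1-α`, the margin is `L_γ`-Lipschitz in `x`, `P_Y = Q_Y`, and
`W₁(P_{X|y}, Q_{X|y}) ≤ ρ` for all `y`, then
`Q(s(X,Y) ≤ q) ≥ 1-α - L_r(f,P) - L_γ·ρ`. -/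
theorem hard_pseudo_calibration_coverage {d K : ℕ} (hK : 2 ≤ K)
    (f : EuclideanSpace ℝ (Fin d) → Fin K → ℝ)
    (hfm : ∀ k, Measurable fun x => f x k)
    (fhat : EuclideanSpace ℝ (Fin d) → Fin K) (hfhatm : Measurable fhat)
    (hfhat : ∀ x k, f x k ≤ f x (fhat x))
    (Lγ : ℝ) (hL : 0 ≤ Lγ)
    (hlip : ∀ x x' y, |margin hK f x y - margin hK f x' y| ≤ Lγ * dist x x')
    (Pc Qc : Fin K → Measure (EuclideanSpace ℝ (Fin d)))
    [∀ y, IsProbabilityMeasure (Pc y)] [∀ y, IsProbabilityMeasure (Qc y)]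
    (w : Fin K → ℝ≥0∞) (hw : ∑ y, w y = 1)
    (P Q : Measure (EuclideanSpace ℝ (Fin d) × Fin K))
    (hP : P = ∑ y, w y • ((Pc y).map fun x => (x, y)))
    (hQ : Q = ∑ y, w y • ((Qc y).map fun x => (x, y)))
    (ρ : ℝ) (hρ : 0 ≤ ρ)
    (hshift : ∀ y, W1 (Pc y) (Qc y) ≤ ENNReal.ofReal ρ)
    (α : ℝ) (hα : α ∈ Set.Icc (0:ℝ) 1) (q : ℝ)
    (hcov : ENNReal.ofReal (1 - α) ≤ Q {p | score hK f p.1 (fhat p.1) ≤ q}) :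
    1 - α - (∫ p, ramp (margin hK f p.1 p.2) ∂P) - Lγ * ρ ≤
      (Q {p | score hK f p.1 p.2 ≤ q}).toReal :=
  hard_pseudo_calibration_coverage_general hK f hfm fhat hfhat Lγ hL hlip Pc Qc w hw P Q hP hQ ρ hρ
    hshift α q hcov
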